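/- arXiv:2207.07229 — 4 statements merged into one kernel-verified Lean document; each statement's English description precedes it below -/
import Mathlib

section
/- Let v be an OR vertex of a constraint graph with incident blue edges a, b, c. Suppose at time t: a points into v and a ∈ F (a flipped in the previous step), c points into v with c ∉ F, b points away from v with b ∉ F, and at time t + 1 edge b does not satisfy the free-flip condition (i) at the vertex b points to. Then in the DCL time step from t to t + 1, among the edges incident to v exactly c reverses (so c now points away from v), while a and b do not reverse. Hence a signal entering an OR vertex along one blue edge exits along the blue edge that was already pointing in, taking exactly 2 time steps: an OR vertex functions as a Reversible Fan-in. -/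
namespace DCLOrVertex

variable {V E : Type*}

/-- The vertex an edge currently points to, under orientation `o`. -/
def head (ends : E → V × V) (o : E → Bool) (e : E) : V :=
  if o e then (ends e).1 else (ends e).2

open Classical in
/-- Total incoming weight at vertex `v` under orientation `o`. -/
noncomputable def inW [Fintype E] (ends : E → V × V) (w : E → ℕ)
    (o : E → Bool) (v : V) : ℕ :=
  ∑ e ∈ Finset.univ.filter fun e => head ends o e = v, w e

/-- The weight inequality of the free-flip condition (i): after reversing `e`,
the total incoming weight at the vertex `e` currently points to is still at
least that vertex's requirement. -/
def Slack [Fintype E] (ends : E → V × V) (w : E → ℕ) (req : V → ℕ)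
    (o : E → Bool) (e : E) : Prop :=
  req (head ends o e) ≤ inW ends w o (head ends o e) - w e

/-- Free-flip condition (i): `e ∉ F` and reversing `e` keeps the incoming
weight at its current head at least the requirement. -/
def Free [Fintype E] (ends : E → V × V) (w : E → ℕ) (req : V → ℕ)
    (o : E → Bool) (F : Set E) (e : E) : Prop :=
  e ∉ F ∧ Slack ends w req o e

/-- The DCL rule: `e` reverses iff (i) it can free-flip, or (ii) `e ∈ F` and no
other edge currently pointing into the same vertex as `e` satisfies (i). -/
def Flips [Fintype E] (ends : E → V × V) (w : E → ℕ) (req : V → ℕ)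
    (o : E → Bool) (F : Set E) (e : E) : Prop :=
  Free ends w req o F e ∨
    (e ∈ F ∧ ∀ e', e' ≠ e → head ends o e' = head ends o e → ¬ Free ends w req o F e')

open Classical in
/-- The synchronous DCL update of the orientation. -/
noncomputable def nextO [Fintype E] (ends : E → V × V) (w : E → ℕ) (req : V → ℕ)
    (o : E → Bool) (F : Set E) : E → Bool :=
  fun e => if Flips ends w req o F e then !(o e) else o e

/-- **An OR vertex functions as a Reversible Fan-in.**
Let `v` be an OR vertex (requirement 2) whose incident edges are exactly the
blue (weight-2) edges `a`, `b`, `c`.  If at time `t` edge `a` points into `v`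
and just flipped (`a ∈ F`), edge `c` points into `v` with `c ∉ F`, edge `b`
points away from `v` with `b ∉ F`, and at time `t + 1` edge `b` does not
satisfy the weight inequality of the free-flip condition (i) at the vertex it
points to, then in the step from `t` to `t + 1` exactly `c` reverses among the
edges incident to `v` (so `c` now points away from `v`), while `a` and `b` do
not reverse. -/
theorem or_vertex_fan_in [Fintype E]
    (ends : E → V × V) (w : E → ℕ) (req : V → ℕ)
    (hw : ∀ e, w e = 1 ∨ w e = 2)
    (v : V) (a b c : E)
    (hab : a ≠ b) (hac : a ≠ c) (hbc : b ≠ c)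
    (hinc : ∀ e, ((ends e).1 = v ∨ (ends e).2 = v) ↔ (e = a ∨ e = b ∨ e = c))
    (hwa : w a = 2) (hwb : w b = 2) (hwc : w c = 2)
    (hreq : req v = 2)
    (hla : (ends a).1 ≠ (ends a).2) (hlb : (ends b).1 ≠ (ends b).2)
    (hlc : (ends c).1 ≠ (ends c).2)
    (o : E → Bool) (F : Set E)
    (ha : head ends o a = v) (haF : a ∈ F)
    (hc : head ends o c = v) (hcF : c ∉ F)
    (hb : head ends o b ≠ v) (hbF : b ∉ F)
    (hb1 : ¬ Slack ends w req (nextO ends w req o F) b) :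
    Flips ends w req o F c ∧ ¬ Flips ends w req o F a ∧ ¬ Flips ends w req o F b ∧
      head ends (nextO ends w req o F) c ≠ v := by
  classical
  set n := nextO ends w req o F with hn
  -- any edge whose head is v is one of a, b, c
  have hmem : ∀ (o' : E → Bool) (e : E), head ends o' e = v → e = a ∨ e = b ∨ e = c := by
    intro o' e he
    apply (hinc e).mp
    unfold head at he
    split at he
    · exact Or.inl he
    · exact Or.inr he
  -- generic incoming-weight computation
  have hsum : ∀ (o' : E → Bool) (x y : E), x ≠ y →
      (∀ e, head ends o' e = v ↔ (e = x ∨ e = y)) →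
      inW ends w o' v = w x + w y := by
    intro o' x y hxy hiff
    unfold inW
    have hfil : Finset.univ.filter (fun e => head ends o' e = v) = {x, y} := by
      ext e
      simp [hiff e]
    rw [hfil, Finset.sum_pair hxy]
  -- at time t, the edges into v are exactly a and c
  have hiff0 : ∀ e, head ends o e = v ↔ (e = a ∨ e = c) := by
    intro e
    constructor
    · intro he
      rcases hmem o e he with h | h | h
      · exact Or.inl h
      · exact absurd (h ▸ he) hb
      · exact Or.inr h
    · rintro (rfl | rfl)
      · exact ha
      · exact hc
  have hinW0 : inW ends w o v = 4 := by
    rw [hsum o a c hac hiff0, hwa, hwc]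
  -- c free-flips
  have hSc : Slack ends w req o c := by
    unfold Slack
    rw [hc, hinW0, hwc, hreq]
  have hFreec : Free ends w req o F c := ⟨hcF, hSc⟩
  have hFc : Flips ends w req o F c := Or.inl hFreec
  -- a does not flip
  have hnFa : ¬ Flips ends w req o F a := by
    rintro (⟨hnF, _⟩ | ⟨_, hall⟩)
    · exact hnF haF
    · exact hall c (Ne.symm hac) (hc.trans ha.symm) hFreec
  -- c points away from v at time t+1
  have hnc : n c = !(o c) := if_pos hFc
  have hheadc : head ends n c ≠ v := by
    unfold head at hc ⊢
    rw [hnc]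
    cases hoc : o c <;> rw [hoc] at hc <;> simp only [hoc, Bool.not_false, Bool.not_true,
      if_true, if_false]
    · rw [← hc]
      exact hlc
    · rw [← hc]
      exact fun h => hlc h.symm
  -- b does not flip
  have hnFb : ¬ Flips ends w req o F b := by
    rintro (⟨_, hSb⟩ | ⟨hbF', _⟩)
    swap
    · exact hbF hbF'
    -- suppose b flips; derive contradiction with hb1
    apply hb1
    have hFb : Flips ends w req o F b := Or.inl ⟨hbF, hSb⟩
    have hna : n a = o a := if_neg hnFa
    have hnb : n b = !(o b) := if_pos hFb
    have hheada : head ends n a = v := by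
      unfold head at ha ⊢
      rw [hna]; exact ha
    have hbinc : (ends b).1 = v ∨ (ends b).2 = v := (hinc b).mpr (Or.inr (Or.inl rfl))
    have hheadb : head ends n b = v := by
      unfold head at hb ⊢
      rw [hnb]
      cases hob : o b <;> rw [hob] at hb <;>
        simp only [Bool.not_false, Bool.not_true, if_true, if_false]
      · exact hbinc.resolve_right hb
      · exact hbinc.resolve_left hb
    have hiff1 : ∀ e, head ends n e = v ↔ (e = a ∨ e = b) := by
      intro e
      constructor
      · intro he
        rcases hmem n e he with h | h | h
        · exact Or.inl h
        · exact Or.inr h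
        · exact absurd (h ▸ he) hheadc
      · rintro (rfl | rfl)
        · exact hheada
        · exact hheadb
    have hinW1 : inW ends w n v = 4 := by
      rw [hsum n a b hab hiff1, hwa, hwb]
    unfold Slack
    rw [hheadb, hinW1, hwb, hreq]
  exact ⟨hFc, hnFa, hnFb, hheadc⟩

end DCLOrVertex
end

section
/- Let v be an AND vertex of a constraint graph with incident red edges r₁, r₂ and blue edge b. Suppose at time t: r₁ and r₂ both point into v with r₁, r₂ ∈ F (both red edges just flipped to point toward v), and b points into v with b ∉ F. Then in the DCL time step from t to t + 1, b reverses (now pointing away from v) while r₁ and r₂ do not reverse. (If both red edges flip to point towards an AND vertex in the same time step, in the next time step the blue edge flips.) -/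
namespace DCLAndVertex16

variable {V E : Type*}

/-- The vertex an edge currently points to, under orientation `o`. -/
def head (ends : E → V × V) (o : E → Bool) (e : E) : V :=
  if o e then (ends e).1 else (ends e).2

open Classical in
/-- Total incoming weight at vertex `v` under orientation `o`. -/
noncomputable def inW [Fintype E] (ends : E → V × V) (w : E → ℕ)
    (o : E → Bool) (v : V) : ℕ :=
  ∑ e ∈ Finset.univ.filter fun e => head ends o e = v, w e

/-- Free-flip condition (i): `e ∉ F` and, after reversing `e`, the total
incoming weight at the vertex `e` currently points to is still at least that
vertex's requirement. -/
def Free [Fintype E] (ends : E → V × V) (w : E → ℕ) (req : V → ℕ)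
    (o : E → Bool) (F : Set E) (e : E) : Prop :=
  e ∉ F ∧ req (head ends o e) ≤ inW ends w o (head ends o e) - w e

/-- The DCL rule: `e` reverses iff (i) it can free-flip, or (ii) `e ∈ F` and no
other edge currently pointing into the same vertex as `e` satisfies (i). -/
def Flips [Fintype E] (ends : E → V × V) (w : E → ℕ) (req : V → ℕ)
    (o : E → Bool) (F : Set E) (e : E) : Prop :=
  Free ends w req o F e ∨
    (e ∈ F ∧ ∀ e', e' ≠ e → head ends o e' = head ends o e → ¬ Free ends w req o F e')

/-- **Both red edges flipping into an AND vertex make the blue edge flip.**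
Let `v` be an AND vertex (requirement 2) whose incident edges are exactly the
red (weight-1) edges `r₁`, `r₂` and the blue (weight-2) edge `b`.  If at time
`t` both red edges point into `v` with `r₁, r₂ ∈ F` (they just flipped toward
`v`) and the blue edge points into `v` with `b ∉ F`, then in the step from `t`
to `t + 1` the blue edge `b` reverses while `r₁` and `r₂` do not. -/
theorem and_vertex_both_red_in [Fintype E]
    (ends : E → V × V) (w : E → ℕ) (req : V → ℕ)
    (hw : ∀ e, w e = 1 ∨ w e = 2)
    (v : V) (r₁ r₂ b : E)
    (h12 : r₁ ≠ r₂) (h1b : r₁ ≠ b) (h2b : r₂ ≠ b)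
    (hinc : ∀ e, ((ends e).1 = v ∨ (ends e).2 = v) ↔ (e = r₁ ∨ e = r₂ ∨ e = b))
    (hw1 : w r₁ = 1) (hw2 : w r₂ = 1) (hwb : w b = 2)
    (hreq : req v = 2)
    (hl1 : (ends r₁).1 ≠ (ends r₁).2) (hl2 : (ends r₂).1 ≠ (ends r₂).2)
    (hlb : (ends b).1 ≠ (ends b).2)
    (o : E → Bool) (F : Set E)
    (h1 : head ends o r₁ = v) (h1F : r₁ ∈ F)
    (h2 : head ends o r₂ = v) (h2F : r₂ ∈ F)
    (hb : head ends o b = v) (hbF : b ∉ F) :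
    Flips ends w req o F b ∧ ¬ Flips ends w req o F r₁ ∧ ¬ Flips ends w req o F r₂ := by
  classical
  have hset : (Finset.univ.filter fun e => head ends o e = v) = {r₁, r₂, b} := by
    ext e
    simp only [Finset.mem_filter, Finset.mem_univ, true_and, Finset.mem_insert,
      Finset.mem_singleton]
    constructor
    · intro he
      apply (hinc e).mp
      unfold head at he
      split at he
      · exact Or.inl he
      · exact Or.inr he
    · rintro (rfl | rfl | rfl) <;> assumption
  have hin : inW ends w o v = 4 := by
    unfold inW
    rw [hset]
    rw [Finset.sum_insert (by simp [h12, h1b]), Finset.sum_insert (by simp [h2b]),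
      Finset.sum_singleton, hw1, hw2, hwb]
    rfl
  have hfreeb : Free ends w req o F b := by
    refine ⟨hbF, ?_⟩
    rw [hb, hin, hwb, hreq]
  refine ⟨Or.inl hfreeb, ?_, ?_⟩
  · rintro (⟨hF, -⟩ | ⟨-, hall⟩)
    · exact hF h1F
    · exact hall b (Ne.symm h1b) (hb.trans h1.symm) hfreeb
  · rintro (⟨hF, -⟩ | ⟨-, hall⟩)
    · exact hF h2F
    · exact hall b (Ne.symm h2b) (hb.trans h2.symm) hfreeb

end DCLAndVertex16
end

section
/- Let v be an AND vertex of a constraint graph with incident red edges r₁, r₂ and blue edge b. Suppose at time t: r₁ points into v with r₁ ∈ F (it just flipped toward v), r₂ points away from v with r₂ ∉ F, and b points into v with b ∉ F. Then in the DCL time step from t to t + 1, r₁ reverses again (flipping back to point away from v) and b does not reverse. (If one red edge but not the other flips to point towards an AND vertex, in the next time step the same red edge flips back.) -/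
namespace DCLAndVertex17

variable {V E : Type*}

/-- The vertex an edge currently points to, under orientation `o`. -/
def head (ends : E → V × V) (o : E → Bool) (e : E) : V :=
  if o e then (ends e).1 else (ends e).2

open Classical in
/-- Total incoming weight at vertex `v` under orientation `o`. -/
noncomputable def inW [Fintype E] (ends : E → V × V) (w : E → ℕ)
    (o : E → Bool) (v : V) : ℕ :=
  ∑ e ∈ Finset.univ.filter fun e => head ends o e = v, w e

/-- Free-flip condition (i): `e ∉ F` and, after reversing `e`, the total
incoming weight at the vertex `e` currently points to is still at least that
vertex's requirement. -/
def Free [Fintype E] (ends : E → V × V) (w : E → ℕ) (req : V → ℕ)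
    (o : E → Bool) (F : Set E) (e : E) : Prop :=
  e ∉ F ∧ req (head ends o e) ≤ inW ends w o (head ends o e) - w e

/-- The DCL rule: `e` reverses iff (i) it can free-flip, or (ii) `e ∈ F` and no
other edge currently pointing into the same vertex as `e` satisfies (i). -/
def Flips [Fintype E] (ends : E → V × V) (w : E → ℕ) (req : V → ℕ)
    (o : E → Bool) (F : Set E) (e : E) : Prop :=
  Free ends w req o F e ∨
    (e ∈ F ∧ ∀ e', e' ≠ e → head ends o e' = head ends o e → ¬ Free ends w req o F e')

/-- **One red edge flipping into an AND vertex bounces back.**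
Let `v` be an AND vertex (requirement 2) whose incident edges are exactly the
red (weight-1) edges `r₁`, `r₂` and the blue (weight-2) edge `b`.  If at time
`t` edge `r₁` points into `v` and just flipped (`r₁ ∈ F`), edge `r₂` points
away from `v` with `r₂ ∉ F`, and the blue edge points into `v` with `b ∉ F`,
then in the step from `t` to `t + 1` edge `r₁` reverses again (flipping back
away from `v`) and `b` does not reverse. -/
theorem and_vertex_red_bounces_back [Fintype E]
    (ends : E → V × V) (w : E → ℕ) (req : V → ℕ)
    (hw : ∀ e, w e = 1 ∨ w e = 2)
    (v : V) (r₁ r₂ b : E)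
    (h12 : r₁ ≠ r₂) (h1b : r₁ ≠ b) (h2b : r₂ ≠ b)
    (hinc : ∀ e, ((ends e).1 = v ∨ (ends e).2 = v) ↔ (e = r₁ ∨ e = r₂ ∨ e = b))
    (hw1 : w r₁ = 1) (hw2 : w r₂ = 1) (hwb : w b = 2)
    (hreq : req v = 2)
    (hl1 : (ends r₁).1 ≠ (ends r₁).2) (hl2 : (ends r₂).1 ≠ (ends r₂).2)
    (hlb : (ends b).1 ≠ (ends b).2)
    (o : E → Bool) (F : Set E)
    (h1 : head ends o r₁ = v) (h1F : r₁ ∈ F)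
    (h2 : head ends o r₂ ≠ v) (h2F : r₂ ∉ F)
    (hb : head ends o b = v) (hbF : b ∉ F) :
    Flips ends w req o F r₁ ∧ ¬ Flips ends w req o F b := by
  classical
  have hmem : ∀ e, head ends o e = v → e = r₁ ∨ e = r₂ ∨ e = b := by
    intro e he
    apply (hinc e).1
    unfold head at he
    by_cases h : o e <;> simp [h] at he <;> tauto
  have hset : (Finset.univ.filter fun e => head ends o e = v) = {r₁, b} := by
    ext e
    simp only [Finset.mem_filter, Finset.mem_univ, true_and, Finset.mem_insert,
      Finset.mem_singleton]
    constructor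
    · intro he
      rcases hmem e he with h | h | h
      · exact Or.inl h
      · exact absurd (h ▸ he) h2
      · exact Or.inr h
    · rintro (rfl | rfl)
      · exact h1
      · exact hb
  have hinW : inW ends w o v = 3 := by
    rw [inW, hset, Finset.sum_pair h1b, hw1, hwb]
  have hnfb : ∀ e, head ends o e = v → e ≠ r₂ → ¬ Free ends w req o F e := by
    intro e he hne ⟨hF, hle⟩
    rcases hmem e he with rfl | rfl | rfl
    · exact hF h1F
    · exact hne rfl
    · rw [he, hinW, hreq, hwb] at hle; omega
  constructor
  · exact Or.inr ⟨h1F, fun e' hne hhead =>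
      hnfb e' (hhead.trans h1) (fun h => h2 (h ▸ hhead.trans h1))⟩
  · rintro (hfree | ⟨hmemF, _⟩)
    · exact hnfb b hb h2b.symm hfree
    · exact hbF hmemF


end DCLAndVertex17
end

section
/- Let a constraint graph contain a path v₀, e₁, v₁, e₂, …, e_k, v_k (edges of any colors) in which each internal vertex v₁, …, v_{k−1} has degree exactly 2 (incident only to e_i and e_{i+1}) and required incoming weight 1. Suppose at time 0 every edge e_i with i ≥ 2 points leftward (toward v_{i−1}), edge e₁ points rightward (toward v₁) with e₁ ∈ F, and no other path edge is in F. Then the signal propagates along the path one edge per time step: for each time step t with 1 ≤ t ≤ k − 1, the set of path edges that reverse at step t is exactly {e_{t+1}}, so after step t the edges e₁, …, e_{t+1} all point rightward and the rest point leftward. -/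
namespace DCLSignalPropagation

variable {V E : Type*}

/-- The vertex an edge currently points to, under orientation `o`. -/
def head (ends : E → V × V) (o : E → Bool) (e : E) : V :=
  if o e then (ends e).1 else (ends e).2

open Classical in
/-- Total incoming weight at vertex `v` under orientation `o`. -/
noncomputable def inW [Fintype E] (ends : E → V × V) (w : E → ℕ)
    (o : E → Bool) (v : V) : ℕ :=
  ∑ e ∈ Finset.univ.filter fun e => head ends o e = v, w e

/-- Free-flip condition (i): `e ∉ F` and, after reversing `e`, the total
incoming weight at the vertex `e` currently points to is still at least that
vertex's requirement. -/
def Free [Fintype E] (ends : E → V × V) (w : E → ℕ) (req : V → ℕ)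
    (o : E → Bool) (F : Set E) (e : E) : Prop :=
  e ∉ F ∧ req (head ends o e) ≤ inW ends w o (head ends o e) - w e

/-- The DCL rule: `e` reverses iff (i) it can free-flip, or (ii) `e ∈ F` and no
other edge currently pointing into the same vertex as `e` satisfies (i). -/
def Flips [Fintype E] (ends : E → V × V) (w : E → ℕ) (req : V → ℕ)
    (o : E → Bool) (F : Set E) (e : E) : Prop :=
  Free ends w req o F e ∨
    (e ∈ F ∧ ∀ e', e' ≠ e → head ends o e' = head ends o e → ¬ Free ends w req o F e')

open Classical in
/-- The synchronous DCL update of the orientation. -/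
noncomputable def nextO [Fintype E] (ends : E → V × V) (w : E → ℕ) (req : V → ℕ)
    (o : E → Bool) (F : Set E) : E → Bool :=
  fun e => if Flips ends w req o F e then !(o e) else o e

open Classical in
lemma inW_pair [Fintype E] (ends : E → V × V) (w : E → ℕ) (o : E → Bool)
    (v : V) (a b : E) (hab : a ≠ b)
    (hdeg : ∀ e, ((ends e).1 = v ∨ (ends e).2 = v) ↔ (e = a ∨ e = b)) :
    inW ends w o v =
      (if head ends o a = v then w a else 0) +
      (if head ends o b = v then w b else 0) := by
  classical
  have hsub : (Finset.univ.filter fun e => head ends o e = v)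
      = ({a, b} : Finset E).filter fun e => head ends o e = v := by
    ext e
    simp only [Finset.mem_filter, Finset.mem_univ, true_and, Finset.mem_insert,
      Finset.mem_singleton]
    constructor
    · intro he
      refine ⟨(hdeg e).1 ?_, he⟩
      by_cases h : o e
      · left; simpa [head, h] using he
      · right; simpa [head, h] using he
    · exact fun h => h.2
  unfold inW
  rw [hsub, Finset.sum_filter, Finset.sum_pair hab]

lemma head_eq_of (ends : E → V × V) (o o' : E → Bool) (e : E)
    (h : o' e = o e) : head ends o' e = head ends o e := by
  unfold head; rw [h]

lemma head_toggle (ends : E → V × V) (o o' : E → Bool) (e : E) (x y : V)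
    (he : ends e = (x, y) ∨ ends e = (y, x))
    (hh : head ends o e = y) (ho : o' e = !(o e)) :
    head ends o' e = x := by
  unfold head at hh ⊢
  rcases he with h | h <;> rw [h] at hh ⊢ <;> cases hb : o e <;>
    rw [hb] at hh <;> simp at hh <;> rw [ho, hb] <;> simp [hh]

/-- **A signal propagates along a path one edge per time step.**
The constraint graph contains a path `v₀, e₁, v₁, e₂, …, e_k, v_k` (edges of
any colors) whose internal vertices `v₁, …, v_{k-1}` have degree exactly 2 and
required incoming weight 1.  At time 0, `e₁` points rightward (toward `v₁`)
with `e₁ ∈ F`, every `e_i` with `i ≥ 2` points leftward (toward `v_{i-1}`),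
and no other path edge is in `F`.  Then for every time step `t` with
`1 ≤ t ≤ k - 1`, the set of path edges that reverse at step `t` is exactly
`{e_{t+1}}`, so after step `t` the edges `e₁, …, e_{t+1}` all point rightward
and the rest point leftward. -/
theorem signal_propagates_along_path [Fintype E]
    (ends : E → V × V) (w : E → ℕ) (req : V → ℕ)
    (hw : ∀ e, w e = 1 ∨ w e = 2)
    (k : ℕ) (vs : ℕ → V) (es : ℕ → E)
    (hvs : ∀ i ≤ k, ∀ j ≤ k, vs i = vs j → i = j)
    (hes : ∀ i, 1 ≤ i → i ≤ k → ∀ j, 1 ≤ j → j ≤ k → es i = es j → i = j)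
    (hends : ∀ i, 1 ≤ i → i ≤ k →
      ends (es i) = (vs (i - 1), vs i) ∨ ends (es i) = (vs i, vs (i - 1)))
    (hdeg : ∀ i, 1 ≤ i → i ≤ k - 1 → ∀ e,
      ((ends e).1 = vs i ∨ (ends e).2 = vs i) ↔ (e = es i ∨ e = es (i + 1)))
    (hreq : ∀ i, 1 ≤ i → i ≤ k - 1 → req (vs i) = 1)
    (o : ℕ → E → Bool) (F : ℕ → Set E)
    (ho1 : head ends (o 0) (es 1) = vs 1)
    (hoi : ∀ i, 2 ≤ i → i ≤ k → head ends (o 0) (es i) = vs (i - 1))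
    (hF1 : es 1 ∈ F 0)
    (hFi : ∀ i, 2 ≤ i → i ≤ k → es i ∉ F 0)
    (hstep : ∀ t, o (t + 1) = nextO ends w req (o t) (F t))
    (hflip : ∀ t, F (t + 1) = {e | o (t + 1) e ≠ o t e}) :
    ∀ t, 1 ≤ t → t ≤ k - 1 →
      (∀ i, 1 ≤ i → i ≤ k → (es i ∈ F t ↔ i = t + 1)) ∧
      (∀ i, 1 ≤ i → i ≤ k →
        head ends (o t) (es i) = if i ≤ t + 1 then vs i else vs (i - 1)) := by
  have vne : ∀ i, i ≤ k → ∀ j, j ≤ k → i ≠ j → vs i ≠ vs j :=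
    fun i hi j hj hij h => hij (hvs i hi j hj h)
  suffices main : ∀ t, t ≤ k - 1 →
      (∀ i, 1 ≤ i → i ≤ k → (es i ∈ F t ↔ i = t + 1)) ∧
      (∀ i, 1 ≤ i → i ≤ k →
        head ends (o t) (es i) = if i ≤ t + 1 then vs i else vs (i - 1)) by
    exact fun t _ ht2 => main t ht2
  intro t
  induction t with
  | zero =>
    intro _
    constructor
    · intro i hi1 hik
      constructor
      · intro hmem
        by_contra hne
        exact hFi i (by omega) hik hmem
      · intro h; subst h; exact hF1
    · intro i hi1 hik
      by_cases hc : i ≤ 1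
      · have : i = 1 := by omega
        subst this
        rw [if_pos hc]; exact ho1
      · rw [if_neg hc]; exact hoi i (by omega) hik
  | succ t ih =>
    intro ht1
    obtain ⟨hFt, hHt⟩ := ih (by omega)
    have hk2 : 2 ≤ k := by omega
    have ht2k : t + 2 ≤ k := by omega
    -- incoming weight at internal vertices at time t
    have hin : ∀ j, 1 ≤ j → j ≤ k - 1 →
        inW ends w (o t) (vs j)
          = (if j ≤ t + 1 then w (es j) else 0)
            + (if t + 1 ≤ j then w (es (j + 1)) else 0) := by
      intro j hj1 hj2
      have hj1k : j + 1 ≤ k := by omega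
      have hne : es j ≠ es (j + 1) := fun h => by
        have := hes j hj1 (by omega) (j + 1) (by omega) hj1k h; omega
      rw [inW_pair ends w (o t) (vs j) (es j) (es (j + 1)) hne (hdeg j hj1 hj2)]
      have h1 : head ends (o t) (es j) = if j ≤ t + 1 then vs j else vs (j - 1) :=
        hHt j hj1 (by omega)
      have h2 : head ends (o t) (es (j + 1))
          = if j + 1 ≤ t + 1 then vs (j + 1) else vs j := by
        rw [hHt (j + 1) (by omega) hj1k]; simp
      have hne1 : vs (j - 1) ≠ vs j := vne (j - 1) (by omega) j (by omega) (by omega)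
      have hne2 : vs (j + 1) ≠ vs j := vne (j + 1) hj1k j (by omega) (by omega)
      by_cases hc : j ≤ t + 1 <;> by_cases hc2 : t + 1 ≤ j
      · rw [if_pos hc] at h1
        rw [if_neg (by omega)] at h2
        rw [h1, h2, if_pos rfl, if_pos rfl, if_pos hc, if_pos hc2]
      · rw [if_pos hc] at h1
        rw [if_pos (by omega)] at h2
        rw [h1, h2, if_pos rfl, if_neg hne2, if_pos hc, if_neg hc2]
      · rw [if_neg hc] at h1
        rw [if_neg (by omega)] at h2
        rw [h1, h2, if_neg hne1, if_pos rfl, if_neg hc, if_pos hc2]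
      · omega
    -- the Free edges among the path edges at time t are exactly es (t+2)
    have hfree : ∀ i, 1 ≤ i → i ≤ k →
        (Free ends w req (o t) (F t) (es i) ↔ i = t + 2) := by
      intro i hi1 hik
      constructor
      · intro hf
        by_contra hne
        rcases Nat.lt_or_ge i (t + 2) with hlt | hge
        · -- i ≤ t + 1
          by_cases hc : i = t + 1
          · subst hc
            exact hf.1 ((hFt (t + 1) hi1 hik).2 rfl)
          · -- i ≤ t : not enough incoming weight
            have hit : i ≤ t := by omega
            have hhead : head ends (o t) (es i) = vs i := by
              rw [hHt i hi1 hik, if_pos (by omega)]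
            have h2 := hf.2
            rw [hhead, hin i hi1 (by omega), if_pos (by omega),
              if_neg (by omega), hreq i hi1 (by omega)] at h2
            omega
        · -- i ≥ t + 3
          have hge3 : t + 3 ≤ i := by omega
          have hhead : head ends (o t) (es i) = vs (i - 1) := by
            rw [hHt i hi1 hik, if_neg (by omega)]
          have h2 := hf.2
          have hi11 : i - 1 + 1 = i := by omega
          rw [hhead, hin (i - 1) (by omega) (by omega), if_neg (by omega),
            if_pos (by omega), hi11, hreq (i - 1) (by omega) (by omega)] at h2
          omega
      · intro h; subst h
        constructor
        · intro hmem
          have := (hFt (t + 2) (by omega) ht2k).1 hmem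
          omega
        · have hhead : head ends (o t) (es (t + 2)) = vs (t + 1) := by
            rw [hHt (t + 2) (by omega) ht2k, if_neg (by omega)]
            simp
          rw [hhead, hin (t + 1) (by omega) (by omega), if_pos (by omega),
            if_pos (by omega), hreq (t + 1) (by omega) (by omega)]
          have : t + 1 + 1 = t + 2 := rfl
          rw [this, Nat.add_sub_cancel]
          rcases hw (es (t + 1)) with h | h <;> omega
    -- the flipping path edges at time t are exactly es (t+2)
    have hflips : ∀ i, 1 ≤ i → i ≤ k →
        (Flips ends w req (o t) (F t) (es i) ↔ i = t + 2) := by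
      intro i hi1 hik
      constructor
      · intro hf
        rcases hf with hf | ⟨hmem, hall⟩
        · exact (hfree i hi1 hik).1 hf
        · -- i = t + 1, but es (t+2) is free with the same head: contradiction
          have hi : i = t + 1 := (hFt i hi1 hik).1 hmem
          subst hi
          exfalso
          refine hall (es (t + 2)) ?_ ?_ ((hfree (t + 2) (by omega) ht2k).2 rfl)
          · intro h
            have := hes (t + 2) (by omega) ht2k (t + 1) (by omega) (by omega) h
            omega
          · have ha : head ends (o t) (es (t + 2)) = vs (t + 1) := by
              rw [hHt (t + 2) (by omega) ht2k, if_neg (by omega)]; simp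
            have hb : head ends (o t) (es (t + 1)) = vs (t + 1) := by
              rw [hHt (t + 1) (by omega) (by omega), if_pos (by omega)]
            rw [ha, hb]
      · intro h
        exact Or.inl ((hfree i hi1 hik).2 h)
    -- new orientation of path edges
    have hOk : ∀ i, 1 ≤ i → i ≤ k → i ≠ t + 2 →
        o (t + 1) (es i) = o t (es i) := by
      intro i hi1 hik hne
      rw [hstep t]
      unfold nextO
      rw [if_neg (fun h => hne ((hflips i hi1 hik).1 h))]
    have hOflip : o (t + 1) (es (t + 2)) = !(o t (es (t + 2))) := by
      rw [hstep t]
      unfold nextO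
      rw [if_pos ((hflips (t + 2) (by omega) ht2k).2 rfl)]
    have hH' : ∀ i, 1 ≤ i → i ≤ k →
        head ends (o (t + 1)) (es i)
          = if i ≤ t + 2 then vs i else vs (i - 1) := by
      intro i hi1 hik
      by_cases hc : i = t + 2
      · subst hc
        rw [if_pos (le_refl _)]
        have hold : head ends (o t) (es (t + 2)) = vs (t + 2 - 1) := by
          rw [hHt (t + 2) (by omega) ht2k, if_neg (by omega)]
        exact head_toggle ends (o t) (o (t + 1)) (es (t + 2)) (vs (t + 2))
          (vs (t + 2 - 1)) (Or.symm (hends (t + 2) (by omega) ht2k)) hold hOflip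
      · rw [head_eq_of ends (o t) (o (t + 1)) (es i) (hOk i hi1 hik hc),
          hHt i hi1 hik]
        by_cases hc2 : i ≤ t + 1
        · rw [if_pos hc2, if_pos (by omega)]
        · rw [if_neg hc2, if_neg (by omega)]
    have hF' : ∀ i, 1 ≤ i → i ≤ k → (es i ∈ F (t + 1) ↔ i = t + 2) := by
      intro i hi1 hik
      rw [hflip t]
      simp only [Set.mem_setOf_eq]
      constructor
      · intro h
        by_contra hne
        exact h (hOk i hi1 hik hne)
      · intro h; subst h
        rw [hOflip]
        simp
    exact ⟨fun i hi1 hik => by rw [hF' i hi1 hik], fun i hi1 hik => hH' i hi1 hik⟩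


end DCLSignalPropagation
end
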